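/- Let κ : [r₀, r₁] → ℝ be positive and differentiable, N continuous and nonnegative, ε > 0, and suppose (N(r) − ε)·κ(r)/r ≤ κ'(r) for all r. If κ(r₁) ≤ (r₁/r₀)^(a−ε)·κ(r₀) for some a ≥ 0, then there exists t ∈ [r₀, r₁] with N(t) ≤ a. -/

import Mathlib

open Set

/-!
If `N > a` on all of `[r₀, r₁]`, the differential inequality gives `κ'/κ > (a - ε)/r` there, so
`log κ(r) - (a - ε) log r` is strictly increasing and `κ` grows strictly faster than
`r ^ (a - ε)`, contradicting the assumed slow growth between `r₀` and `r₁`.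
-/

section LogDerivComparison

variable {κ κ' : ℝ → ℝ} {r₀ r₁ c : ℝ}

lemma strictMonoOn_log_sub_mul_log (hr₀ : 0 < r₀)
    (hpos : ∀ r ∈ Icc r₀ r₁, 0 < κ r)
    (hderiv : ∀ r ∈ Icc r₀ r₁, HasDerivAt κ (κ' r) r)
    (hgt : ∀ r ∈ Ioo r₀ r₁, c * κ r / r < κ' r) :
    StrictMonoOn (fun r => Real.log (κ r) - c * Real.log r) (Icc r₀ r₁) := by
  have hderiv_log : ∀ r ∈ Icc r₀ r₁,
      HasDerivAt (fun r => Real.log (κ r) - c * Real.log r) (κ' r / κ r - c * r⁻¹) r :=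
    fun r hr => ((hderiv r hr).log (hpos r hr).ne').sub
      ((Real.hasDerivAt_log (hr₀.trans_le hr.1).ne').const_mul c)
  refine strictMonoOn_of_deriv_pos (convex_Icc _ _)
    (fun r hr => (hderiv_log r hr).continuousAt.continuousWithinAt) fun r hr => ?_
  rw [interior_Icc] at hr
  have hrI : r ∈ Icc r₀ r₁ := Ioo_subset_Icc_self hr
  have hκr := hpos r hrI
  rw [(hderiv_log r hrI).deriv, sub_pos, ← div_eq_mul_inv, lt_div_iff₀ hκr, div_mul_eq_mul_div]
  exact hgt r hr

lemma rpow_mul_lt_of_mul_div_lt_deriv (hr₀ : 0 < r₀) (hr : r₀ < r₁)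
    (hpos : ∀ r ∈ Icc r₀ r₁, 0 < κ r)
    (hderiv : ∀ r ∈ Icc r₀ r₁, HasDerivAt κ (κ' r) r)
    (hgt : ∀ r ∈ Ioo r₀ r₁, c * κ r / r < κ' r) :
    (r₁ / r₀) ^ c * κ r₀ < κ r₁ := by
  have hκ₀ := hpos r₀ (left_mem_Icc.mpr hr.le)
  have hκ₁ := hpos r₁ (right_mem_Icc.mpr hr.le)
  have hratio : 0 < r₁ / r₀ := div_pos (hr₀.trans hr) hr₀
  have hincr := strictMonoOn_log_sub_mul_log hr₀ hpos hderiv hgt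
    (left_mem_Icc.mpr hr.le) (right_mem_Icc.mpr hr.le) hr
  rw [← Real.log_lt_log_iff (mul_pos (Real.rpow_pos_of_pos hratio c) hκ₀) hκ₁,
    Real.log_mul (Real.rpow_pos_of_pos hratio c).ne' hκ₀.ne', Real.log_rpow hratio,
    Real.log_div (hr₀.trans hr).ne' hr₀.ne']
  linarith

end LogDerivComparison

theorem stmt6_general (r₀ r₁ a ε : ℝ) (κ N κ' : ℝ → ℝ)
    (hr₀ : 0 < r₀) (hr : r₀ < r₁)
    (hκpos : ∀ r ∈ Icc r₀ r₁, 0 < κ r)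
    (hκderiv : ∀ r ∈ Icc r₀ r₁, HasDerivAt κ (κ' r) r)
    (hlow : ∀ r ∈ Icc r₀ r₁, (N r - ε) * κ r / r ≤ κ' r)
    (hslow : κ r₁ ≤ (r₁ / r₀) ^ (a - ε) * κ r₀) :
    ∃ t ∈ Icc r₀ r₁, N t ≤ a := by
  by_contra! hN
  refine hslow.not_gt (rpow_mul_lt_of_mul_div_lt_deriv hr₀ hr hκpos hκderiv fun r hr' => ?_)
  have hrI : r ∈ Icc r₀ r₁ := Ioo_subset_Icc_self hr'
  calc (a - ε) * κ r / r < (N r - ε) * κ r / r := by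
        have hr_pos : 0 < r := hr₀.trans hr'.1
        have hκr := hκpos r hrI
        gcongr
        exact hN r hrI
    _ ≤ κ' r := hlow r hrI

/-- Slow growth of κ forces the frequency function to be ≤ a somewhere. -/
theorem stmt6 (r₀ r₁ a ε : ℝ) (κ N κ' : ℝ → ℝ)
    (hr₀ : 0 < r₀) (hr : r₀ < r₁) (hε : 0 < ε) (ha : 0 ≤ a)
    (hκpos : ∀ r ∈ Icc r₀ r₁, 0 < κ r)
    (hκderiv : ∀ r ∈ Icc r₀ r₁, HasDerivAt κ (κ' r) r)
    (hNcont : ContinuousOn N (Icc r₀ r₁))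
    (hNnonneg : ∀ r ∈ Icc r₀ r₁, 0 ≤ N r)
    (hlow : ∀ r ∈ Icc r₀ r₁, (N r - ε) * κ r / r ≤ κ' r)
    (hslow : κ r₁ ≤ (r₁ / r₀) ^ (a - ε) * κ r₀) :
    ∃ t ∈ Icc r₀ r₁, N t ≤ a :=
  stmt6_general r₀ r₁ a ε κ N κ' hr₀ hr hκpos hκderiv hlow hslow
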